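/- Let 0 ≤ f ∈ L¹[-π,π]. Let u and v solve the Dirichlet Poisson problems -u'' = f, u(-π) = u(π) = 0 and -v'' = f^#, v(-π) = v(π) = 0, where f^# is the symmetric decreasing rearrangement of f. Then ∫_{-π}^{π} φ(u) dx ≤ ∫_{-π}^{π} φ(v) dx for every increasing convex function φ: ℝ → ℝ. -/

import Mathlib

open Real MeasureTheory Set

noncomputable section

/-- `u` (with derivative `u'`) is a solution of the Dirichlet Poisson problem
`-u'' = f` on `(-π, π)` with zero boundary values. -/
def DirichletSol (f u u' : ℝ → ℝ) : Prop :=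
  (∀ x ∈ Icc (-π) π, HasDerivWithinAt u (u' x) (Icc (-π) π) x) ∧
  ContinuousOn u' (Icc (-π) π) ∧
  (∀ x ∈ Icc (-π) π, u' x = u' (-π) - ∫ t in (-π)..x, f t) ∧
  (u (-π) = 0 ∧ u π = 0)

/-- The decreasing rearrangement of `f : [-π,π] → ℝ`, evaluated at `t`. -/
def decRearr (f : ℝ → ℝ) (t : ℝ) : ℝ :=
  sInf {s : ℝ | (volume {x : ℝ | x ∈ Icc (-π) π ∧ s < f x}).toReal ≤ t}

/-- The symmetric decreasing rearrangement of `f : [-π,π] → ℝ`. -/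
def symDecRearr (f : ℝ → ℝ) (x : ℝ) : ℝ := decRearr f (2 * |x|)

open scoped ENNReal

/-!
Both solutions are integrals of the data against the Green kernel. Fix a level `c > 0` and let
`a ≤ b` be the extreme points of `{u ≥ c}`. The combination `(π - b) u(a) + (a + π) u(b)` is the
integral of `f` against a trapezoid built from two Green kernels, so by the Hardy–Littlewood
inequality it is at most the integral of `f^*` against the decreasing rearrangement of the
trapezoid, and that rearrangement lies below the kernel which represents
`(2π - (b - a)) v((b - a)/2)`. Hence `v ≥ c` at `(b - a)/2`, and, `v` being symmetric decreasing,
on an interval of length `b - a`: `|{u ≥ c}| ≤ |{v ≥ c}|` for every `c`. For monotone `φ` the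
layer-cake formula turns this into `∫ φ(u) ≤ ∫ φ(v)`.
-/

section Distribution

variable {α : Type*} [MeasurableSpace α] {μ : Measure α}

theorem measure_setOf_lt_le_of_forall_measure_setOf_le {u v : α → ℝ}
    (h : ∀ c, μ {x | c ≤ u x} ≤ μ {x | c ≤ v x}) (c : ℝ) :
    μ {x | c < u x} ≤ μ {x | c < v x} := by
  have hunion : ∀ w : α → ℝ, {x | c < w x} = ⋃ n : ℕ, {x | c + 1 / (n + 1) ≤ w x} := by
    intro w
    ext x
    simp only [mem_ofPred_eq, mem_iUnion]
    refine ⟨fun hx => ?_, fun ⟨n, hn⟩ => lt_of_lt_of_le (lt_add_of_pos_right c (by positivity)) hn⟩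
    obtain ⟨n, hn⟩ := exists_nat_one_div_lt (sub_pos.mpr hx)
    exact ⟨n, by linarith⟩
  have hmono : ∀ w : α → ℝ, Monotone fun n : ℕ => {x | c + 1 / (n + 1) ≤ w x} := by
    intro w n m hnm x (hx : c + 1 / (n + 1) ≤ w x)
    exact le_trans (by gcongr) hx
  rw [hunion u, hunion v, (hmono u).measure_iUnion, (hmono v).measure_iUnion]
  exact iSup_mono fun n => h _

/-- An upper set of `ℝ` is empty, `ℝ`, or `Ioi`/`Ici` of its infimum. -/
theorem measure_preimage_le_of_isUpperSet {u v : α → ℝ}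
    (h : ∀ c, μ {x | c ≤ u x} ≤ μ {x | c ≤ v x}) {T : Set ℝ} (hT : IsUpperSet T) :
    μ (u ⁻¹' T) ≤ μ (v ⁻¹' T) := by
  by_cases hbdd : BddBelow T
  · rcases T.eq_empty_or_nonempty with rfl | hne
    · simp
    have hIoi : Ioi (sInf T) ⊆ T := fun y hy => by
      obtain ⟨t, ht, hty⟩ := exists_lt_of_csInf_lt hne hy
      exact hT hty.le ht
    by_cases hmem : sInf T ∈ T
    · rw [subset_antisymm (fun y hy => csInf_le hbdd hy) (hT.Ici_subset hmem)]
      exact h _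
    · rw [subset_antisymm (fun y hy => lt_of_le_of_ne (csInf_le hbdd hy)
        (fun e => hmem (e ▸ hy))) hIoi]
      exact measure_setOf_lt_le_of_forall_measure_setOf_le h _
  · have : T = univ := eq_univ_of_forall fun y => by
      obtain ⟨t, ht, hty⟩ := not_bddBelow_iff.mp hbdd y
      exact hT hty.le ht
    simp [this]

theorem integral_le_integral_of_forall_measure_setOf_lt_le {g₁ g₂ : α → ℝ}
    (hg₁ : Integrable g₁ μ) (hg₂ : Integrable g₂ μ) (h₁ : 0 ≤ᵐ[μ] g₁) (h₂ : 0 ≤ᵐ[μ] g₂)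
    (h : ∀ t, μ {x | t < g₁ x} ≤ μ {x | t < g₂ x}) :
    ∫ x, g₁ x ∂μ ≤ ∫ x, g₂ x ∂μ := by
  rw [integral_eq_lintegral_of_nonneg_ae h₁ hg₁.aestronglyMeasurable,
    integral_eq_lintegral_of_nonneg_ae h₂ hg₂.aestronglyMeasurable]
  refine ENNReal.toReal_mono hg₂.lintegral_lt_top.ne ?_
  rw [lintegral_eq_lintegral_meas_lt μ h₁ hg₁.aemeasurable,
    lintegral_eq_lintegral_meas_lt μ h₂ hg₂.aemeasurable]
  exact lintegral_mono fun t => h t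

theorem integral_comp_le_integral_comp_of_forall_measure_setOf_le [IsFiniteMeasure μ]
    {u v : α → ℝ} {φ : ℝ → ℝ} (hφ : Monotone φ) (hu : 0 ≤ᵐ[μ] u) (hv : 0 ≤ᵐ[μ] v)
    (hφu : Integrable (fun x => φ (u x)) μ) (hφv : Integrable (fun x => φ (v x)) μ)
    (h : ∀ c, μ {x | c ≤ u x} ≤ μ {x | c ≤ v x}) :
    ∫ x, φ (u x) ∂μ ≤ ∫ x, φ (v x) ∂μ := by
  have hlevel : ∀ t, μ {x | t < φ (u x) - φ 0} ≤ μ {x | t < φ (v x) - φ 0} := fun t =>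
    measure_preimage_le_of_isUpperSet h (T := {y | t < φ y - φ 0})
      fun y z hyz hy => lt_of_lt_of_le hy (sub_le_sub_right (hφ hyz) _)
  have := integral_le_integral_of_forall_measure_setOf_lt_le (g₁ := fun x => φ (u x) - φ 0)
    (g₂ := fun x => φ (v x) - φ 0)
    (hφu.sub (integrable_const _)) (hφv.sub (integrable_const _))
    (hu.mono fun x hx => sub_nonneg.mpr (hφ hx)) (hv.mono fun x hx => sub_nonneg.mpr (hφ hx))
    hlevel
  rwa [integral_sub hφu (integrable_const _), integral_sub hφv (integrable_const _),
    sub_le_sub_iff_right] at this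

theorem lintegral_ofReal_mul_eq_lintegral_setLIntegral {f g : α → ℝ} (hf : AEMeasurable f μ)
    (hg : Measurable g) (hg0 : 0 ≤ᵐ[μ] g) :
    ∫⁻ x, ENNReal.ofReal (g x) * ENNReal.ofReal (f x) ∂μ
      = ∫⁻ s in Ioi 0, ∫⁻ x in {x | s < g x}, ENNReal.ofReal (f x) ∂μ := by
  set ρ := μ.withDensity fun x => ENNReal.ofReal (f x)
  calc ∫⁻ x, ENNReal.ofReal (g x) * ENNReal.ofReal (f x) ∂μ
      = ∫⁻ x, ENNReal.ofReal (g x) ∂ρ := by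
        rw [lintegral_withDensity_eq_lintegral_mul₀ hf.ennreal_ofReal
          hg.ennreal_ofReal.aemeasurable]
        simp only [Pi.mul_apply, mul_comm]
    _ = ∫⁻ s in Ioi 0, ρ {x | s < g x} :=
        lintegral_eq_lintegral_meas_lt ρ (withDensity_absolutelyContinuous μ _ |>.ae_le hg0)
          hg.aemeasurable
    _ = _ := by
        simp only [ρ, withDensity_apply _ (measurableSet_lt measurable_const hg)]

theorem ofReal_setIntegral_mul {s : Set α} {φ ψ : α → ℝ} (hs : MeasurableSet s)
    (h : IntegrableOn (fun x => φ x * ψ x) s μ) (hφ : ∀ x ∈ s, 0 ≤ φ x) (hψ : ∀ x ∈ s, 0 ≤ ψ x) :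
    ENNReal.ofReal (∫ x in s, φ x * ψ x ∂μ)
      = ∫⁻ x in s, ENNReal.ofReal (φ x) * ENNReal.ofReal (ψ x) ∂μ := by
  rw [ofReal_integral_eq_lintegral_ofReal h
    (ae_restrict_of_forall_mem hs fun x hx => mul_nonneg (hφ x hx) (hψ x hx))]
  exact setLIntegral_congr_fun hs fun x hx => ENNReal.ofReal_mul (hφ x hx)

end Distribution

theorem intervalIntegral_integral_eq_integral_sub_mul {f : ℝ → ℝ} {a b : ℝ}
    (hf : IntervalIntegrable f volume a b) :
    ∫ t in a..b, (∫ s in a..t, f s) = ∫ s in a..b, (b - s) * f s := by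
  have hF : AbsolutelyContinuousOnInterval (fun t => ∫ s in a..t, f s) a b :=
    hf.absolutelyContinuousOnInterval_intervalIntegral left_mem_uIcc
  have hg : AbsolutelyContinuousOnInterval (fun t => t - b) a b :=
    (LipschitzWith.id.sub (LipschitzWith.const b)).lipschitzOnWith.absolutelyContinuousOnInterval
  have hibp := hF.integral_mul_deriv_eq_deriv_mul hg
  simp only [deriv_sub_const, deriv_id'', mul_one, sub_self, mul_zero,
    intervalIntegral.integral_same, zero_mul, zero_sub] at hibp
  rw [hibp, ← intervalIntegral.integral_neg]
  refine intervalIntegral.integral_congr_ae ?_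
  filter_upwards [hf.ae_hasDerivAt_integral] with t ht htab
  rw [(ht (uIoc_subset_uIcc htab) a left_mem_uIcc).deriv]
  ring

def distribFun (f : ℝ → ℝ) (s : ℝ) : ℝ≥0∞ := volume {x | x ∈ Icc (-π) π ∧ s < f x}

section Rearrangement

variable {f : ℝ → ℝ}

theorem decRearr_eq_sInf (f : ℝ → ℝ) (t : ℝ) :
    decRearr f t = sInf {s | (distribFun f s).toReal ≤ t} := rfl

theorem volume_restrict_setOf_lt (f : ℝ → ℝ) (s : ℝ) :
    volume.restrict (Icc (-π) π) {x | s < f x} = distribFun f s := by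
  rw [Measure.restrict_apply' measurableSet_Icc, inter_comm]
  rfl

theorem distribFun_le (f : ℝ → ℝ) (s : ℝ) : distribFun f s ≤ ENNReal.ofReal (2 * π) := by
  calc distribFun f s ≤ volume (Icc (-π) π) := measure_mono fun x hx => hx.1
    _ = ENNReal.ofReal (2 * π) := by rw [Real.volume_Icc]; ring_nf

theorem distribFun_ne_top (f : ℝ → ℝ) (s : ℝ) : distribFun f s ≠ ⊤ :=
  ne_top_of_le_ne_top ENNReal.ofReal_ne_top (distribFun_le f s)

theorem distribFun_toReal_le (f : ℝ → ℝ) (s : ℝ) : (distribFun f s).toReal ≤ 2 * π :=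
  ENNReal.toReal_le_of_le_ofReal (by positivity) (distribFun_le f s)

theorem antitone_distribFun (f : ℝ → ℝ) : Antitone (distribFun f) :=
  fun _ _ hst => measure_mono fun _ hx => ⟨hx.1, lt_of_le_of_lt hst hx.2⟩

theorem distribFun_of_neg (hf0 : ∀ x ∈ Icc (-π) π, 0 ≤ f x) {s : ℝ} (hs : s < 0) :
    distribFun f s = ENNReal.ofReal (2 * π) := by
  have : {x | x ∈ Icc (-π) π ∧ s < f x} = Icc (-π) π :=
    Set.ext fun x => ⟨And.left, fun hx => ⟨hx, hs.trans_le (hf0 x hx)⟩⟩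
  rw [distribFun, this, Real.volume_Icc]
  ring_nf

theorem exists_distribFun_toReal_le (hf : IntegrableOn f (Icc (-π) π)) {t : ℝ} (ht : 0 < t) :
    ∃ s, (distribFun f s).toReal ≤ t := by
  set A := ∫ x in Icc (-π) π, |f x|
  have hA : 0 ≤ A := integral_nonneg fun _ => abs_nonneg _
  refine ⟨A / t + 1, ?_⟩
  have markov := mul_meas_ge_le_integral_of_nonneg (ae_of_all _ fun x => abs_nonneg (f x))
    hf.abs (A / t + 1)
  have hle : (distribFun f (A / t + 1)).toReal
      ≤ (volume.restrict (Icc (-π) π)).real {x | A / t + 1 ≤ |f x|} := by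
    rw [← volume_restrict_setOf_lt]
    exact measureReal_mono fun x (hx : _ < f x) => hx.le.trans (le_abs_self _)
  have hmul : (A / t + 1) * t = A + t := by field_simp
  nlinarith [ENNReal.toReal_nonneg (a := distribFun f (A / t + 1))]

theorem nonneg_of_distribFun_toReal_le (hf0 : ∀ x ∈ Icc (-π) π, 0 ≤ f x) {t s : ℝ}
    (ht : t < 2 * π) (hs : (distribFun f s).toReal ≤ t) : 0 ≤ s := by
  refine not_lt.mp fun hneg => ?_
  rw [distribFun_of_neg hf0 hneg, ENNReal.toReal_ofReal (by positivity)] at hs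
  linarith

theorem bddBelow_setOf_distribFun_le (hf0 : ∀ x ∈ Icc (-π) π, 0 ≤ f x) {t : ℝ}
    (ht : t < 2 * π) : BddBelow {s | (distribFun f s).toReal ≤ t} :=
  ⟨0, fun _ hs => nonneg_of_distribFun_toReal_le hf0 ht hs⟩

theorem decRearr_le (hf0 : ∀ x ∈ Icc (-π) π, 0 ≤ f x) {t s : ℝ} (ht : t < 2 * π)
    (h : (distribFun f s).toReal ≤ t) : decRearr f t ≤ s :=
  csInf_le (bddBelow_setOf_distribFun_le hf0 ht) h

theorem le_decRearr (hf : IntegrableOn f (Icc (-π) π)) {t s : ℝ} (ht : 0 < t)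
    (h : ENNReal.ofReal t < distribFun f s) : s ≤ decRearr f t := by
  refine le_csInf (exists_distribFun_toReal_le hf ht)
    fun r (hr : (distribFun f r).toReal ≤ t) => not_lt.mp fun hrs => ?_
  have := (ENNReal.ofReal_lt_iff_lt_toReal ht.le (distribFun_ne_top f r)).mp
    (h.trans_le (antitone_distribFun f hrs.le))
  linarith

theorem ofReal_lt_distribFun (hf0 : ∀ x ∈ Icc (-π) π, 0 ≤ f x) {t s : ℝ} (ht : 0 ≤ t)
    (ht' : t < 2 * π) (h : s < decRearr f t) : ENNReal.ofReal t < distribFun f s := by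
  rw [ENNReal.ofReal_lt_iff_lt_toReal ht (distribFun_ne_top f s)]
  exact not_le.mp fun hs => h.not_ge (decRearr_le hf0 ht' hs)

theorem decRearr_of_two_pi_le (f : ℝ → ℝ) {t : ℝ} (ht : 2 * π ≤ t) : decRearr f t = 0 := by
  have : {s | (distribFun f s).toReal ≤ t} = univ :=
    eq_univ_of_forall fun s => (distribFun_toReal_le f s).trans ht
  rw [decRearr_eq_sInf, this, Real.sInf_of_not_bddBelow not_bddBelow_univ]

theorem decRearr_nonneg (hf0 : ∀ x ∈ Icc (-π) π, 0 ≤ f x) (t : ℝ) : 0 ≤ decRearr f t := by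
  rcases lt_or_ge t (2 * π) with ht | ht
  · exact Real.sInf_nonneg fun _ hs => nonneg_of_distribFun_toReal_le hf0 ht hs
  · exact (decRearr_of_two_pi_le f ht).ge

theorem antitoneOn_decRearr (hf : IntegrableOn f (Icc (-π) π))
    (hf0 : ∀ x ∈ Icc (-π) π, 0 ≤ f x) : AntitoneOn (decRearr f) (Ioi 0) := by
  intro t (ht : 0 < t) t' _ htt'
  rcases lt_or_ge t' (2 * π) with ht' | ht'
  · exact csInf_le_csInf (bddBelow_setOf_distribFun_le hf0 ht')
      (exists_distribFun_toReal_le hf ht) fun s (hs : _ ≤ t) => hs.trans htt'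
  · exact (decRearr_of_two_pi_le f ht').trans_le (decRearr_nonneg hf0 t)

end Rearrangement

section HardyLittlewood

variable {f : ℝ → ℝ}

theorem aemeasurable_decRearr (hf : IntegrableOn f (Icc (-π) π))
    (hf0 : ∀ x ∈ Icc (-π) π, 0 ≤ f x) {s : Set ℝ} (hs : MeasurableSet s) (hs0 : s ⊆ Ioi 0) :
    AEMeasurable (decRearr f) (volume.restrict s) :=
  aemeasurable_restrict_of_antitoneOn hs ((antitoneOn_decRearr hf hf0).mono hs0)

theorem lintegral_decRearr_le (hf : IntegrableOn f (Icc (-π) π))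
    (hf0 : ∀ x ∈ Icc (-π) π, 0 ≤ f x) :
    ∫⁻ t in Ioo 0 (2 * π), ENNReal.ofReal (decRearr f t)
      ≤ ∫⁻ x in Icc (-π) π, ENNReal.ofReal (f x) := by
  rw [lintegral_eq_lintegral_meas_lt _ (ae_of_all _ (decRearr_nonneg hf0))
      (aemeasurable_decRearr hf hf0 measurableSet_Ioo Ioo_subset_Ioi_self),
    lintegral_eq_lintegral_meas_lt _ (ae_restrict_of_forall_mem measurableSet_Icc hf0)
      hf.aemeasurable]
  refine lintegral_mono fun s => ?_
  rw [volume_restrict_setOf_lt, Measure.restrict_apply' measurableSet_Ioo]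
  calc volume ({t | s < decRearr f t} ∩ Ioo 0 (2 * π))
      ≤ volume (Ioo 0 (distribFun f s).toReal) :=
        measure_mono fun t ⟨hst, ht0, ht⟩ => ⟨ht0, (ENNReal.ofReal_lt_iff_lt_toReal ht0.le
          (distribFun_ne_top f s)).mp (ofReal_lt_distribFun hf0 ht0.le ht hst)⟩
    _ = distribFun f s := by
      rw [Real.volume_Ioo, sub_zero, ENNReal.ofReal_toReal (distribFun_ne_top f s)]

theorem integrableOn_decRearr (hf : IntegrableOn f (Icc (-π) π))
    (hf0 : ∀ x ∈ Icc (-π) π, 0 ≤ f x) : IntegrableOn (decRearr f) (Icc 0 (2 * π)) := by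
  refine (integrableOn_Icc_iff_integrableOn_Ioo).mpr
    ⟨(aemeasurable_decRearr hf hf0 measurableSet_Ioo Ioo_subset_Ioi_self).aestronglyMeasurable,
      ?_⟩
  rw [hasFiniteIntegral_iff_ofReal (ae_of_all _ (decRearr_nonneg hf0))]
  exact (lintegral_decRearr_le hf hf0).trans_lt hf.lintegral_lt_top

theorem setLIntegral_le_lintegral_decRearr (hf : IntegrableOn f (Icc (-π) π))
    (hf0 : ∀ x ∈ Icc (-π) π, 0 ≤ f x) {E : Set ℝ} (hE : MeasurableSet E)
    (hEI : E ⊆ Icc (-π) π) :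
    ∫⁻ x in E, ENNReal.ofReal (f x)
      ≤ ∫⁻ t in Ioo 0 (volume E).toReal, ENNReal.ofReal (decRearr f t) := by
  have hEtop : volume E ≠ ⊤ :=
    ne_top_of_le_ne_top measure_Icc_lt_top.ne (measure_mono hEI)
  rw [lintegral_eq_lintegral_meas_lt _ (ae_restrict_of_forall_mem hE fun x hx => hf0 x (hEI hx))
      (hf.aemeasurable.mono_measure (Measure.restrict_mono hEI le_rfl)),
    lintegral_eq_lintegral_meas_le _ (ae_of_all _ (decRearr_nonneg hf0))
      (aemeasurable_decRearr hf hf0 measurableSet_Ioo Ioo_subset_Ioi_self)]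
  refine lintegral_mono fun s => ?_
  rw [Measure.restrict_apply' hE, Measure.restrict_apply' measurableSet_Ioo]
  have hsub : Ioo 0 (min (volume E).toReal (distribFun f s).toReal)
      ⊆ {t | s ≤ decRearr f t} ∩ Ioo 0 (volume E).toReal := fun t ⟨ht0, ht⟩ =>
    ⟨le_decRearr hf ht0 ((ENNReal.ofReal_lt_iff_lt_toReal ht0.le (distribFun_ne_top f s)).mpr
      (ht.trans_le (min_le_right _ _))), ht0, ht.trans_le (min_le_left _ _)⟩
  calc volume ({x | s < f x} ∩ E) ≤ min (volume E) (distribFun f s) :=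
        le_min (measure_mono inter_subset_right)
          (measure_mono fun x ⟨hx, hxE⟩ => ⟨hEI hxE, hx⟩)
    _ = volume (Ioo 0 (min (volume E).toReal (distribFun f s).toReal)) := by
      rw [Real.volume_Ioo, sub_zero, ENNReal.ofReal_min, ENNReal.ofReal_toReal hEtop,
        ENNReal.ofReal_toReal (distribFun_ne_top f s)]
    _ ≤ _ := measure_mono hsub

theorem integrableOn_mul_decRearr {f w : ℝ → ℝ} (hf : IntegrableOn f (Icc (-π) π))
    (hf0 : ∀ x ∈ Icc (-π) π, 0 ≤ f x) (hw : Continuous w) :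
    IntegrableOn (fun t => w t * decRearr f t) (Ioo 0 (2 * π)) :=
  ((integrableOn_decRearr hf hf0).continuousOn_mul hw.continuousOn isCompact_Icc).mono_set
    Ioo_subset_Icc_self

theorem setOf_ofReal_lt_inter_Ioo {m : ℝ≥0∞} {L : ℝ} (hL : 0 ≤ L) (hm : m ≤ ENNReal.ofReal L) :
    {t | ENNReal.ofReal t < m} ∩ Ioo 0 L = Ioo 0 m.toReal := by
  have hm' : m ≠ ⊤ := ne_top_of_le_ne_top ENNReal.ofReal_ne_top hm
  ext t
  simp only [mem_inter_iff, mem_ofPred_eq, mem_Ioo]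
  refine ⟨fun ⟨h, h0, _⟩ => ⟨h0, (ENNReal.ofReal_lt_iff_lt_toReal h0.le hm').mp h⟩,
    fun ⟨h0, h⟩ => ⟨(ENNReal.ofReal_lt_iff_lt_toReal h0.le hm').mpr h, h0, ?_⟩⟩
  exact h.trans_le (ENNReal.toReal_le_of_le_ofReal hL hm)

theorem setLIntegral_setOf_lt_le_lintegral_indicator_decRearr {f g : ℝ → ℝ}
    (hf : IntegrableOn f (Icc (-π) π)) (hf0 : ∀ x ∈ Icc (-π) π, 0 ≤ f x) (hgm : Measurable g)
    (s : ℝ) :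
    ∫⁻ x in {x | s < g x} ∩ Icc (-π) π, ENNReal.ofReal (f x)
      ≤ ∫⁻ t in Ioo 0 (2 * π), {t | ENNReal.ofReal t < distribFun g s}.indicator
          (fun t => ENNReal.ofReal (decRearr f t)) t := by
  have hE : MeasurableSet {x | s < g x} := measurableSet_lt measurable_const hgm
  have hvol : volume ({x | s < g x} ∩ Icc (-π) π) = distribFun g s := by
    rw [inter_comm]
    rfl
  rw [lintegral_indicator (measurableSet_lt ENNReal.measurable_ofReal measurable_const),
    Measure.restrict_restrict (measurableSet_lt ENNReal.measurable_ofReal measurable_const),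
    setOf_ofReal_lt_inter_Ioo (by positivity) (distribFun_le g s), ← hvol]
  exact setLIntegral_le_lintegral_decRearr hf hf0 (hE.inter measurableSet_Icc) inter_subset_right

theorem lintegral_mul_le_lintegral_decRearr_mul {f g : ℝ → ℝ}
    (hf : IntegrableOn f (Icc (-π) π)) (hf0 : ∀ x ∈ Icc (-π) π, 0 ≤ f x)
    (hg : IntegrableOn g (Icc (-π) π)) (hgm : Measurable g) (hg0 : ∀ x ∈ Icc (-π) π, 0 ≤ g x) :
    ∫⁻ x in Icc (-π) π, ENNReal.ofReal (g x) * ENNReal.ofReal (f x)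
      ≤ ∫⁻ t in Ioo 0 (2 * π), ENNReal.ofReal (decRearr g t) * ENNReal.ofReal (decRearr f t) := by
  set Φ : ℝ → ℝ → ℝ≥0∞ := fun s t =>
    {t | ENNReal.ofReal t < distribFun g s}.indicator (fun t => ENNReal.ofReal (decRearr f t)) t
  have hΦm : AEMeasurable (Function.uncurry Φ)
      ((volume.restrict (Ioi 0)).prod (volume.restrict (Ioo 0 (2 * π)))) :=
    ((aemeasurable_decRearr hf hf0 measurableSet_Ioo Ioo_subset_Ioi_self).ennreal_ofReal.comp_snd
      ).indicator (measurableSet_lt (ENNReal.measurable_ofReal.comp measurable_snd)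
        ((antitone_distribFun g).measurable.comp measurable_fst))
  have hlevel : ∀ s, ∫⁻ x in {x | s < g x}, ENNReal.ofReal (f x) ∂volume.restrict (Icc (-π) π)
      ≤ ∫⁻ t in Ioo 0 (2 * π), Φ s t := fun s => by
    rw [Measure.restrict_restrict (measurableSet_lt measurable_const hgm)]
    exact setLIntegral_setOf_lt_le_lintegral_indicator_decRearr hf hf0 hgm s
  have hfiber : ∀ t ∈ Ioo 0 (2 * π), ∫⁻ s in Ioi 0, Φ s t
      ≤ ENNReal.ofReal (decRearr g t) * ENNReal.ofReal (decRearr f t) := by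
    intro t ht
    have hL : MeasurableSet {s | ENNReal.ofReal t < distribFun g s} :=
      measurableSet_lt measurable_const (antitone_distribFun g).measurable
    rw [show (fun s => Φ s t) = {s | ENNReal.ofReal t < distribFun g s}.indicator
        fun _ => ENNReal.ofReal (decRearr f t) from rfl,
      lintegral_indicator_const hL, Measure.restrict_apply hL, mul_comm]
    gcongr
    calc volume ({s | ENNReal.ofReal t < distribFun g s} ∩ Ioi 0)
        ≤ volume (Ioc 0 (decRearr g t)) :=
          measure_mono fun s ⟨hs, hs0⟩ => ⟨hs0, le_decRearr hg ht.1 hs⟩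
      _ = ENNReal.ofReal (decRearr g t) := by rw [Real.volume_Ioc, sub_zero]
  calc ∫⁻ x in Icc (-π) π, ENNReal.ofReal (g x) * ENNReal.ofReal (f x)
      = ∫⁻ s in Ioi 0, ∫⁻ x in {x | s < g x}, ENNReal.ofReal (f x)
          ∂volume.restrict (Icc (-π) π) :=
        lintegral_ofReal_mul_eq_lintegral_setLIntegral hf.aemeasurable hgm
          (ae_restrict_of_forall_mem measurableSet_Icc hg0)
    _ ≤ ∫⁻ s in Ioi 0, ∫⁻ t in Ioo 0 (2 * π), Φ s t := lintegral_mono hlevel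
    _ = ∫⁻ t in Ioo 0 (2 * π), ∫⁻ s in Ioi 0, Φ s t := lintegral_lintegral_swap hΦm
    _ ≤ _ := setLIntegral_mono' measurableSet_Ioo hfiber

end HardyLittlewood

def greenKernel (x s : ℝ) : ℝ := -(x * s) / (2 * π) - |x - s| / 2 + π / 2

theorem continuous_greenKernel (x : ℝ) : Continuous (greenKernel x) := by
  unfold greenKernel
  fun_prop

theorem greenKernel_eq_mul (x s : ℝ) :
    greenKernel x s = (π + min x s) * (π - max x s) / (2 * π) := by
  have hπ : π ≠ 0 := pi_ne_zero
  rcases le_total s x with h | h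
  · rw [greenKernel, abs_of_nonneg (sub_nonneg.mpr h), min_eq_right h, max_eq_left h]
    field_simp
    ring
  · rw [greenKernel, abs_of_nonpos (sub_nonpos.mpr h), min_eq_left h, max_eq_right h]
    field_simp
    ring

theorem greenKernel_eq_sub (x s : ℝ) :
    greenKernel x s = (x + π) * (π - s) / (2 * π) - max (x - s) 0 := by
  have hπ : π ≠ 0 := pi_ne_zero
  rcases le_total s x with h | h
  · rw [greenKernel, abs_of_nonneg (sub_nonneg.mpr h), max_eq_left (sub_nonneg.mpr h)]
    field_simp
    ring
  · rw [greenKernel, abs_of_nonpos (sub_nonpos.mpr h), max_eq_right (sub_nonpos.mpr h)]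
    field_simp
    ring

theorem greenKernel_nonneg {x s : ℝ} (hx : x ∈ Icc (-π) π) (hs : s ∈ Icc (-π) π) :
    0 ≤ greenKernel x s := by
  rw [greenKernel_eq_mul]
  have := le_min hx.1 hs.1
  have := max_le hx.2 hs.2
  have := pi_pos
  apply div_nonneg <;> nlinarith

theorem greenKernel_add_greenKernel_neg (x s : ℝ) :
    greenKernel x s + greenKernel x (-s) = π - max |x| |s| := by
  have : |x - s| + |x + s| = 2 * max |x| |s| := by
    cases abs_cases x <;> cases abs_cases s <;> cases abs_cases (x - s) <;>
      cases abs_cases (x + s) <;> cases max_cases |x| |s| <;> linarith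
  rw [greenKernel, greenKernel, sub_neg_eq_add]
  linear_combination (-1/2 : ℝ) * this

/-- The trapezoid with value `(π - b) (s + π)` left of `a`, plateau `(a + π) (π - b)` on `[a, b]`
and value `(a + π) (π - s)` right of `b`. -/
def greenTent (a b s : ℝ) : ℝ := (π - b) * greenKernel a s + (a + π) * greenKernel b s

theorem continuous_greenTent (a b : ℝ) : Continuous (greenTent a b) :=
  (continuous_const.mul (continuous_greenKernel a)).add
    (continuous_const.mul (continuous_greenKernel b))

theorem greenTent_nonneg {a b s : ℝ} (ha : a ∈ Icc (-π) π) (hb : b ∈ Icc (-π) π)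
    (hs : s ∈ Icc (-π) π) : 0 ≤ greenTent a b s :=
  add_nonneg (mul_nonneg (sub_nonneg.mpr hb.2) (greenKernel_nonneg ha hs))
    (mul_nonneg (neg_le_iff_add_nonneg.mp ha.1) (greenKernel_nonneg hb hs))

theorem greenTent_le {a b s : ℝ} (ha : -π ≤ a) (hab : a ≤ b) (hb : b ≤ π)
    (hs : s ∈ Icc (-π) π) :
    greenTent a b s ≤ (π - b) * (s + π) ∧ greenTent a b s ≤ (a + π) * (π - s) ∧
      greenTent a b s ≤ (a + π) * (π - b) := by
  have hπ : π ≠ 0 := pi_ne_zero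
  obtain ⟨hs1, hs2⟩ := hs
  rw [greenTent, greenKernel_eq_mul, greenKernel_eq_mul]
  rcases le_total s a with h | h
  · rw [min_eq_right h, max_eq_left h, min_eq_right (h.trans hab), max_eq_left (h.trans hab)]
    have e : (π - b) * ((π + s) * (π - a) / (2 * π)) + (a + π) * ((π + s) * (π - b) / (2 * π))
        = (π - b) * (s + π) := by field_simp; ring
    rw [e]
    refine ⟨le_rfl, ?_, ?_⟩ <;> nlinarith [mul_nonneg (sub_nonneg.2 h) (sub_nonneg.2 hs2),
      mul_nonneg (neg_le_iff_add_nonneg.1 hs1) (sub_nonneg.2 (h.trans hab)),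
      mul_nonneg (sub_nonneg.2 hb) (sub_nonneg.2 h)]
  rcases le_total s b with h' | h'
  · rw [min_eq_left h, max_eq_right h, min_eq_right h', max_eq_left h']
    have e : (π - b) * ((π + a) * (π - s) / (2 * π)) + (a + π) * ((π + s) * (π - b) / (2 * π))
        = (a + π) * (π - b) := by field_simp; ring
    rw [e]
    refine ⟨?_, ?_, le_rfl⟩ <;> nlinarith [mul_nonneg (sub_nonneg.2 hb) (sub_nonneg.2 h),
      mul_nonneg (neg_le_iff_add_nonneg.1 ha) (sub_nonneg.2 h')]
  · rw [min_eq_left h, max_eq_right h, min_eq_left h', max_eq_right h']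
    have e : (π - b) * ((π + a) * (π - s) / (2 * π)) + (a + π) * ((π + b) * (π - s) / (2 * π))
        = (a + π) * (π - s) := by field_simp; ring
    rw [e]
    refine ⟨?_, le_rfl, ?_⟩ <;>
      nlinarith [mul_nonneg (sub_nonneg.2 h') (neg_le_iff_add_nonneg.1 hs1),
        mul_nonneg (sub_nonneg.2 hs2) (sub_nonneg.2 (hab.trans h')),
        mul_nonneg (neg_le_iff_add_nonneg.1 ha) (sub_nonneg.2 h')]

theorem decRearr_greenTent_le {a b : ℝ} (ha : -π < a) (hab : a ≤ b) (hb : b < π) {t : ℝ}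
    (ht : t ∈ Ioo 0 (2 * π)) :
    decRearr (greenTent a b) t ≤ (2 * π - (b - a)) * ((2 * π - max (b - a) t) / 4) := by
  set l := (2 * π - (b - a)) * ((2 * π - max (b - a) t) / 4)
  have hα : 0 < a + π := by linarith
  have hβ : 0 < π - b := by linarith
  refine decRearr_le (fun s => greenTent_nonneg ⟨ha.le, by linarith⟩ ⟨by linarith, hb.le⟩)
    ht.2 ?_
  by_cases hl : (a + π) * (π - b) ≤ l
  · have : {s | s ∈ Icc (-π) π ∧ l < greenTent a b s} = ∅ :=
      eq_empty_of_forall_notMem fun s ⟨hs, hls⟩ =>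
        (greenTent_le ha.le hab hb.le hs).2.2.trans hl |>.not_gt hls
    rw [distribFun, this, measure_empty, ENNReal.toReal_zero]
    exact ht.1.le
  have hmax : max (b - a) t = t := by
    refine max_eq_right (not_lt.mp fun hlt => hl ?_)
    simp only [l, max_eq_left hlt.le]
    nlinarith [sq_nonneg (a + π - (π - b))]
  have hsub : {s | s ∈ Icc (-π) π ∧ l < greenTent a b s}
      ⊆ Ioo (l / (π - b) - π) (π - l / (a + π)) := by
    rintro s ⟨hs, hls⟩
    obtain ⟨h1, h2, -⟩ := greenTent_le ha.le hab hb.le hs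
    constructor
    · rw [sub_lt_iff_lt_add, div_lt_iff₀ hβ]
      linarith
    · rw [lt_sub_comm, div_lt_iff₀ hα]
      linarith
  have hlen : π - l / (a + π) - (l / (π - b) - π) ≤ t := by
    have : 2 * π - t ≤ l / (a + π) + l / (π - b) := by
      rw [div_add_div _ _ hα.ne' hβ.ne', le_div_iff₀ (by positivity)]
      simp only [l, hmax]
      nlinarith [mul_nonneg (sub_nonneg.mpr ht.2.le) (sq_nonneg (a + π - (π - b)))]
    linarith
  refine ENNReal.toReal_le_of_le_ofReal ht.1.le ((measure_mono hsub).trans ?_)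
  rw [Real.volume_Ioo]
  exact ENNReal.ofReal_le_ofReal hlen

namespace DirichletSol

variable {f u u' : ℝ → ℝ}

theorem continuousOn (hu : DirichletSol f u u') : ContinuousOn u (Icc (-π) π) :=
  fun x hx => (hu.1 x hx).continuousWithinAt

theorem eq_sub_integral (hf : IntegrableOn f (Icc (-π) π)) (hu : DirichletSol f u u') {x : ℝ}
    (hx : x ∈ Icc (-π) π) : u x = u' (-π) * (x + π) - ∫ s in (-π)..x, (x - s) * f s := by
  obtain ⟨hder, hcont, hval, hu0, -⟩ := hu
  have hsub : Icc (-π) x ⊆ Icc (-π) π := Icc_subset_Icc_right hx.2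
  have hfx : IntervalIntegrable f volume (-π) x :=
    (intervalIntegrable_iff_integrableOn_Icc_of_le hx.1).mpr (hf.mono_set hsub)
  have hftc : ∫ t in (-π)..x, u' t = u x - u (-π) :=
    intervalIntegral.integral_eq_sub_of_hasDerivAt_of_le hx.1
      (fun y hy => (hder y (hsub hy)).continuousWithinAt.mono hsub)
      (fun t ht => (hder t (hsub (Ioo_subset_Icc_self ht))).hasDerivAt
        (Icc_mem_nhds ht.1 (ht.2.trans_le hx.2)))
      ((hcont.mono hsub).intervalIntegrable_of_Icc hx.1)
  have hprim : IntervalIntegrable (fun t => ∫ s in (-π)..t, f s) volume (-π) x :=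
    (hfx.absolutelyContinuousOnInterval_intervalIntegral left_mem_uIcc).continuousOn
      |>.intervalIntegrable
  calc u x = ∫ t in (-π)..x, u' t := by rw [hftc, hu0, sub_zero]
    _ = ∫ t in (-π)..x, (u' (-π) - ∫ s in (-π)..t, f s) :=
        intervalIntegral.integral_congr fun t ht =>
          hval t (hsub (by rwa [uIcc_of_le hx.1] at ht))
    _ = _ := by
        rw [intervalIntegral.integral_sub intervalIntegrable_const hprim,
          intervalIntegral.integral_const, intervalIntegral_integral_eq_integral_sub_mul hfx,
          smul_eq_mul, sub_neg_eq_add, mul_comm]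

theorem eq_integral_greenKernel (hf : IntegrableOn f (Icc (-π) π)) (hu : DirichletSol f u u')
    {x : ℝ} (hx : x ∈ Icc (-π) π) : u x = ∫ s in Icc (-π) π, greenKernel x s * f s := by
  have hint : ∀ y, IntegrableOn (fun s => max (y - s) 0 * f s) (Icc (-π) π) := fun y =>
    hf.continuousOn_mul (by fun_prop : Continuous fun s => max (y - s) 0).continuousOn
      isCompact_Icc
  have hplus : ∀ y ∈ Icc (-π) π,
      ∫ s in (-π)..y, (y - s) * f s = ∫ s in Icc (-π) π, max (y - s) 0 * f s := by
    intro y hy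
    have hzero : ∀ s ∈ Icc (-π) π \ Icc (-π) y, max (y - s) 0 * f s = 0 := fun s ⟨hs, hsy⟩ => by
      have : y < s := not_le.mp fun h => hsy ⟨hs.1, h⟩
      rw [max_eq_right (by linarith), zero_mul]
    rw [setIntegral_eq_of_subset_of_forall_sdiff_eq_zero measurableSet_Icc
        (Icc_subset_Icc_right hy.2) hzero, intervalIntegral.integral_of_le hy.1,
      ← integral_Icc_eq_integral_Ioc]
    exact setIntegral_congr_fun measurableSet_Icc fun s hs => by
      rw [max_eq_left (sub_nonneg.2 hs.2)]
  have hπ : π ∈ Icc (-π) π := right_mem_Icc.2 (by linarith [pi_pos])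
  have hK : u' (-π) * (2 * π) = ∫ s in Icc (-π) π, max (π - s) 0 * f s := by
    have := hu.eq_sub_integral hf hπ
    rw [hu.2.2.2.2, hplus π hπ] at this
    linarith
  calc u x = (x + π) / (2 * π) * (∫ s in Icc (-π) π, max (π - s) 0 * f s)
        - ∫ s in Icc (-π) π, max (x - s) 0 * f s := by
        rw [hu.eq_sub_integral hf hx, hplus x hx, ← hK]
        field_simp
    _ = ∫ s in Icc (-π) π, ((x + π) / (2 * π) * (max (π - s) 0 * f s) - max (x - s) 0 * f s) := by
        rw [integral_sub ((hint π).const_mul _) (hint x), integral_const_mul]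
    _ = _ := setIntegral_congr_fun measurableSet_Icc fun s hs => by
        rw [greenKernel_eq_sub, max_eq_left (sub_nonneg.2 hs.2)]
        ring

theorem mul_add_mul_eq_integral_greenTent (hf : IntegrableOn f (Icc (-π) π))
    (hu : DirichletSol f u u') {a b : ℝ} (ha : a ∈ Icc (-π) π) (hb : b ∈ Icc (-π) π) :
    (π - b) * u a + (a + π) * u b = ∫ s in Icc (-π) π, greenTent a b s * f s := by
  have hgreen : ∀ x, IntegrableOn (fun s => greenKernel x s * f s) (Icc (-π) π) := fun x =>
    hf.continuousOn_mul (continuous_greenKernel x).continuousOn isCompact_Icc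
  rw [hu.eq_integral_greenKernel hf ha, hu.eq_integral_greenKernel hf hb,
    ← integral_const_mul, ← integral_const_mul,
    ← integral_add ((hgreen a).const_mul _) ((hgreen b).const_mul _)]
  congr 1
  ext s
  rw [greenTent]
  ring

theorem nonneg (hf : IntegrableOn f (Icc (-π) π)) (hf0 : ∀ x ∈ Icc (-π) π, 0 ≤ f x)
    (hu : DirichletSol f u u') {x : ℝ} (hx : x ∈ Icc (-π) π) : 0 ≤ u x := by
  rw [hu.eq_integral_greenKernel hf hx]
  exact setIntegral_nonneg measurableSet_Icc fun s hs =>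
    mul_nonneg (greenKernel_nonneg hx hs) (hf0 s hs)

theorem mem_Ioo_of_ne_zero (hu : DirichletSol f u u') {x : ℝ} (hx : x ∈ Icc (-π) π)
    (hux : u x ≠ 0) : x ∈ Ioo (-π) π :=
  ⟨hx.1.lt_of_ne fun h => hux (h ▸ hu.2.2.2.1), hx.2.lt_of_ne fun h => hux (h ▸ hu.2.2.2.2)⟩

end DirichletSol

theorem integral_greenKernel_mul_of_even {g : ℝ → ℝ} (hg : IntegrableOn g (Icc (-π) π))
    (heven : ∀ s, g (-s) = g s) (y : ℝ) :
    ∫ s in Icc (-π) π, greenKernel y s * g s = ∫ s in 0..π, (π - max |y| s) * g s := by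
  have hπ : 0 ≤ π := pi_pos.le
  have hint : IntervalIntegrable (fun s => greenKernel y s * g s) volume (-π) π :=
    (intervalIntegrable_iff_integrableOn_Icc_of_le (by linarith)).mpr
      (hg.continuousOn_mul (continuous_greenKernel y).continuousOn isCompact_Icc)
  have hneg : IntervalIntegrable (fun s => greenKernel y s * g s) volume (-π) 0 :=
    hint.mono_set (uIcc_subset_uIcc left_mem_uIcc (by simp [uIcc_of_le, hπ]))
  have hpos : IntervalIntegrable (fun s => greenKernel y s * g s) volume 0 π :=
    hint.mono_set (uIcc_subset_uIcc (by simp [uIcc_of_le, hπ]) right_mem_uIcc)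
  have hrefl : IntervalIntegrable (fun s => greenKernel y (-s) * g (-s)) volume 0 π := by
    simpa using ((IntervalIntegrable.iff_comp_neg).mp hneg).symm
  rw [integral_Icc_eq_integral_Ioc, ← intervalIntegral.integral_of_le (by linarith),
    ← intervalIntegral.integral_add_adjacent_intervals hneg hpos]
  have := intervalIntegral.integral_comp_neg (a := 0) (b := π) fun s => greenKernel y s * g s
  rw [neg_zero] at this
  rw [← this, ← intervalIntegral.integral_add hrefl hpos]
  refine intervalIntegral.integral_congr fun s hs => ?_
  rw [uIcc_of_le hπ] at hs
  rw [heven, ← add_mul, add_comm, greenKernel_add_greenKernel_neg, abs_of_nonneg hs.1]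

theorem symDecRearr_neg (f : ℝ → ℝ) (x : ℝ) : symDecRearr f (-x) = symDecRearr f x := by
  rw [symDecRearr, symDecRearr, abs_neg]

theorem integrableOn_symDecRearr {f : ℝ → ℝ} (hf : IntegrableOn f (Icc (-π) π))
    (hf0 : ∀ x ∈ Icc (-π) π, 0 ≤ f x) : IntegrableOn (symDecRearr f) (Icc (-π) π) := by
  have hπ : 0 ≤ π := pi_pos.le
  have hdec : IntervalIntegrable (decRearr f) volume 0 (2 * π) :=
    (intervalIntegrable_iff_integrableOn_Icc_of_le (by positivity)).mpr
      (integrableOn_decRearr hf hf0)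
  have hpos : IntervalIntegrable (symDecRearr f) volume 0 π := by
    have := hdec.comp_mul_left (c := 2)
    simp only [zero_div, mul_div_cancel_left₀ π two_ne_zero] at this
    refine this.congr fun x hx => ?_
    rw [uIoc_of_le hπ] at hx
    rw [symDecRearr, abs_of_pos hx.1]
  have hneg : IntervalIntegrable (symDecRearr f) volume (-π) 0 := by
    simpa [symDecRearr_neg] using ((IntervalIntegrable.iff_comp_neg).mp hpos).symm
  exact (intervalIntegrable_iff_integrableOn_Icc_of_le (by linarith)).mp (hneg.trans hpos)

namespace DirichletSol

variable {f u u' v v' : ℝ → ℝ}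

theorem eq_integral_decRearr (hf : IntegrableOn f (Icc (-π) π))
    (hf0 : ∀ x ∈ Icc (-π) π, 0 ≤ f x) (hv : DirichletSol (symDecRearr f) v v') {y : ℝ}
    (hy : y ∈ Icc (-π) π) :
    v y = ∫ t in Ioo 0 (2 * π), (2 * π - max (2 * |y|) t) / 4 * decRearr f t := by
  have hf' := integrableOn_symDecRearr hf hf0
  set k := fun t => (2 * π - max (2 * |y|) t) / 4 * decRearr f t
  have hk : ∀ s, 0 ≤ s → (π - max |y| s) * symDecRearr f s = 2 * k (2 * s) := by
    intro s hs
    have : max (2 * |y|) (2 * s) = 2 * max |y| s := (mul_max_of_nonneg _ _ zero_le_two).symm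
    simp only [k, symDecRearr, abs_of_nonneg hs, this]
    ring
  rw [hv.eq_integral_greenKernel hf' hy, integral_greenKernel_mul_of_even hf' (symDecRearr_neg f),
    intervalIntegral.integral_congr fun s hs => hk s (by
      rw [uIcc_of_le pi_pos.le] at hs; exact hs.1),
    intervalIntegral.integral_const_mul, intervalIntegral.integral_comp_mul_left k two_ne_zero,
    mul_zero, smul_eq_mul, ← mul_assoc, mul_inv_cancel₀ two_ne_zero, one_mul,
    intervalIntegral.integral_of_le (by positivity), integral_Ioc_eq_integral_Ioo]

theorem le_of_abs_le (hf : IntegrableOn f (Icc (-π) π))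
    (hf0 : ∀ x ∈ Icc (-π) π, 0 ≤ f x) (hv : DirichletSol (symDecRearr f) v v') {y z : ℝ}
    (hy : y ∈ Icc (-π) π) (hz : z ∈ Icc (-π) π) (hyz : |y| ≤ |z|) : v z ≤ v y := by
  rw [hv.eq_integral_decRearr hf hf0 hy, hv.eq_integral_decRearr hf hf0 hz]
  refine setIntegral_mono_on (integrableOn_mul_decRearr hf hf0 (by fun_prop))
    (integrableOn_mul_decRearr hf hf0 (by fun_prop)) measurableSet_Ioo fun t _ => ?_
  gcongr
  exact decRearr_nonneg hf0 t

theorem weighted_avg_le (hf : IntegrableOn f (Icc (-π) π)) (hf0 : ∀ x ∈ Icc (-π) π, 0 ≤ f x)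
    (hu : DirichletSol f u u') (hv : DirichletSol (symDecRearr f) v v') {a b : ℝ}
    (ha : -π < a) (hab : a ≤ b) (hb : b < π) :
    (π - b) * u a + (a + π) * u b ≤ (2 * π - (b - a)) * v ((b - a) / 2) := by
  set w := fun t => (2 * π - (b - a)) * ((2 * π - max (b - a) t) / 4)
  have hIa : a ∈ Icc (-π) π := ⟨ha.le, by linarith⟩
  have hIb : b ∈ Icc (-π) π := ⟨by linarith, hb.le⟩
  have hIm : (b - a) / 2 ∈ Icc (-π) π := ⟨by linarith, by linarith⟩
  have hTc := continuous_greenTent a b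
  have hT0 : ∀ s ∈ Icc (-π) π, 0 ≤ greenTent a b s := fun s => greenTent_nonneg hIa hIb
  have hw0 : ∀ t ∈ Ioo 0 (2 * π), 0 ≤ w t := fun t ht =>
    mul_nonneg (by linarith) (by linarith [max_le (by linarith : b - a ≤ 2 * π) ht.2.le])
  have hR : (2 * π - (b - a)) * v ((b - a) / 2)
      = ∫ t in Ioo 0 (2 * π), w t * decRearr f t := by
    rw [hv.eq_integral_decRearr hf hf0 hIm, ← integral_const_mul,
      abs_of_nonneg (by linarith), mul_div_cancel₀ _ two_ne_zero]
    congr 1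
    ext t
    ring
  rw [hu.mul_add_mul_eq_integral_greenTent hf hIa hIb, hR,
    ← ENNReal.ofReal_le_ofReal_iff (setIntegral_nonneg measurableSet_Ioo fun t ht =>
      mul_nonneg (hw0 t ht) (decRearr_nonneg hf0 t)),
    ofReal_setIntegral_mul measurableSet_Icc (hf.continuousOn_mul hTc.continuousOn isCompact_Icc)
      hT0 hf0,
    ofReal_setIntegral_mul measurableSet_Ioo (integrableOn_mul_decRearr hf hf0 (by fun_prop))
      hw0 fun t _ => decRearr_nonneg hf0 t]
  calc ∫⁻ s in Icc (-π) π, ENNReal.ofReal (greenTent a b s) * ENNReal.ofReal (f s)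
      ≤ ∫⁻ t in Ioo 0 (2 * π),
          ENNReal.ofReal (decRearr (greenTent a b) t) * ENNReal.ofReal (decRearr f t) :=
        lintegral_mul_le_lintegral_decRearr_mul hf hf0
          (hTc.continuousOn.integrableOn_compact isCompact_Icc) hTc.measurable hT0
    _ ≤ ∫⁻ t in Ioo 0 (2 * π), ENNReal.ofReal (w t) * ENNReal.ofReal (decRearr f t) :=
        setLIntegral_mono' measurableSet_Ioo fun t ht => by
          gcongr
          exact decRearr_greenTent_le ha hab hb ht

theorem le_of_le_endpoints (hf : IntegrableOn f (Icc (-π) π)) (hf0 : ∀ x ∈ Icc (-π) π, 0 ≤ f x)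
    (hu : DirichletSol f u u') (hv : DirichletSol (symDecRearr f) v v') {a b c : ℝ}
    (ha : -π < a) (hab : a ≤ b) (hb : b < π) (hua : c ≤ u a) (hub : c ≤ u b) :
    c ≤ v ((b - a) / 2) := by
  have hweighted := hu.weighted_avg_le hf hf0 hv ha hab hb
  refine le_of_mul_le_mul_left ?_ (by linarith : 0 < 2 * π - (b - a))
  nlinarith [mul_le_mul_of_nonneg_left hua (by linarith : 0 ≤ π - b),
    mul_le_mul_of_nonneg_left hub (by linarith : 0 ≤ a + π)]

theorem Icc_subset_setOf_le (hf : IntegrableOn f (Icc (-π) π))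
    (hf0 : ∀ x ∈ Icc (-π) π, 0 ≤ f x) (hv : DirichletSol (symDecRearr f) v v') {m c : ℝ}
    (hm0 : 0 ≤ m) (hmπ : m ≤ π) (hcv : c ≤ v m) :
    Icc (-m) m ⊆ {x | c ≤ v x} ∩ Icc (-π) π := fun x hx => by
  have hxI : x ∈ Icc (-π) π := ⟨by linarith [hx.1], by linarith [hx.2]⟩
  refine ⟨hcv.trans (hv.le_of_abs_le hf hf0 hxI ⟨by linarith, hmπ⟩ ?_), hxI⟩
  rw [abs_of_nonneg hm0]
  exact abs_le.mpr hx

theorem volume_restrict_setOf_le_le (hf : IntegrableOn f (Icc (-π) π))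
    (hf0 : ∀ x ∈ Icc (-π) π, 0 ≤ f x) (hu : DirichletSol f u u')
    (hv : DirichletSol (symDecRearr f) v v') (c : ℝ) :
    volume.restrict (Icc (-π) π) {x | c ≤ u x} ≤ volume.restrict (Icc (-π) π) {x | c ≤ v x} := by
  rw [Measure.restrict_apply' measurableSet_Icc, Measure.restrict_apply' measurableSet_Icc]
  rcases le_or_gt c 0 with hc | hc
  · exact measure_mono fun x ⟨_, hx⟩ =>
      ⟨hc.trans (hv.nonneg (integrableOn_symDecRearr hf hf0)
        (fun s _ => decRearr_nonneg hf0 _) hx), hx⟩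
  set S := {x | c ≤ u x} ∩ Icc (-π) π
  rcases S.eq_empty_or_nonempty with hS | hS
  · simp [hS]
  have hScpt : IsCompact S := isCompact_Icc.of_isClosed_subset (by
    rw [show S = Icc (-π) π ∩ u ⁻¹' Ici c from inter_comm _ _]
    exact hu.continuousOn.preimage_isClosed_of_isClosed isClosed_Icc isClosed_Ici)
    inter_subset_right
  obtain ⟨hua, haI⟩ := hScpt.sInf_mem hS
  obtain ⟨hub, hbI⟩ := hScpt.sSup_mem hS
  set a := sInf S
  set b := sSup S
  have ha := hu.mem_Ioo_of_ne_zero haI (hc.trans_le hua).ne'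
  have hb := hu.mem_Ioo_of_ne_zero hbI (hc.trans_le hub).ne'
  have hab : a ≤ b := csInf_le_csSup hS hScpt.bddBelow hScpt.bddAbove
  have hcv := hu.le_of_le_endpoints hf hf0 hv ha.1 hab hb.2 hua hub
  calc volume S ≤ volume (Icc a b) :=
        measure_mono fun x hx => ⟨csInf_le hScpt.bddBelow hx, le_csSup hScpt.bddAbove hx⟩
    _ = volume (Icc (-((b - a) / 2)) ((b - a) / 2)) := by
        rw [Real.volume_Icc, Real.volume_Icc]
        ring_nf
    _ ≤ volume ({x | c ≤ v x} ∩ Icc (-π) π) :=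
        measure_mono (hv.Icc_subset_setOf_le hf hf0 (by linarith) (by linarith [ha.1, hb.2]) hcv)

end DirichletSol

theorem dirichlet_comparison_principle (f : ℝ → ℝ)
    (hf : IntegrableOn f (Icc (-π) π)) (hf0 : ∀ x ∈ Icc (-π) π, 0 ≤ f x)
    (u u' v v' : ℝ → ℝ)
    (hu : DirichletSol f u u') (hv : DirichletSol (symDecRearr f) v v') :
    ∀ φ : ℝ → ℝ, ConvexOn ℝ univ φ → Monotone φ →
      (∫ x in Icc (-π) π, φ (u x)) ≤ ∫ x in Icc (-π) π, φ (v x) := by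
  intro φ hφc hφm
  have hφ : Continuous φ := continuousOn_univ.mp (hφc.continuousOn isOpen_univ)
  exact integral_comp_le_integral_comp_of_forall_measure_setOf_le hφm
    (ae_restrict_of_forall_mem measurableSet_Icc fun x hx => hu.nonneg hf hf0 hx)
    (ae_restrict_of_forall_mem measurableSet_Icc fun x hx =>
      hv.nonneg (integrableOn_symDecRearr hf hf0) (fun s _ => decRearr_nonneg hf0 _) hx)
    ((hφ.comp_continuousOn hu.continuousOn).integrableOn_compact isCompact_Icc)
    ((hφ.comp_continuousOn hv.continuousOn).integrableOn_compact isCompact_Icc)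
    (hu.volume_restrict_setOf_le_le hf hf0 hv)
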